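/- Let G be a finite simple graph with minimum degree δ(G) ≥ α̃(G). Then G contains a triangle or G is bipartite. -/

import Mathlib

open SimpleGraph Finset

variable {V : Type*}

/-- Between every two disjoint vertex sets of sizes `a` and `b` there is an edge. -/
def HasEdgeBetween (G : SimpleGraph V) (a b : ℕ) : Prop :=
  ∀ A B : Finset V, Disjoint A B → A.card = a → B.card = b →
    ∃ x ∈ A, ∃ y ∈ B, G.Adj x y

/-- The bipartite independence number α̃(G). -/
noncomputable def biAlpha (G : SimpleGraph V) : ℕ :=
  sInf {k | ∃ a b : ℕ, 0 < a ∧ 0 < b ∧ a + b = k + 1 ∧ HasEdgeBetween G a b}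

/-- `s` is an independent set in `G`. -/
def IsIndepSet (G : SimpleGraph V) (s : Finset V) : Prop :=
  ∀ x ∈ s, ∀ y ∈ s, x ≠ y → ¬ G.Adj x y

/-- The independence number α(G). -/
noncomputable def indepNum (G : SimpleGraph V) : ℕ :=
  sSup {n | ∃ s : Finset V, _root_.IsIndepSet G s ∧ s.card = n}

/-- The graph C̃_ℓ: a cycle of length ℓ together with an extra vertex adjacent to
two consecutive vertices of the cycle. -/
def tildeC (ℓ : ℕ) : SimpleGraph (Fin ℓ ⊕ Unit) :=
  SimpleGraph.fromRel (fun x y =>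
    match x, y with
    | Sum.inl i, Sum.inl j => (i.val + 1) % ℓ = j.val
    | Sum.inl i, Sum.inr _ => i.val = 0 ∨ i.val = 1
    | _, _ => False)

/-- `G` contains a (not necessarily induced) copy of `H`. -/
def ContainsCopy {W : Type*} (H : SimpleGraph W) (G : SimpleGraph V) : Prop :=
  ∃ f : H →g G, Function.Injective f

/-- `G` is pancyclic: it has cycles of every length from 3 to `|V|`. -/
def Pancyclic (G : SimpleGraph V) [Fintype V] : Prop :=
  ∀ ℓ, 3 ≤ ℓ → ℓ ≤ Fintype.card V →
    ∃ (v : V) (c : G.Walk v v), c.IsCycle ∧ c.length = ℓ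

/-! Let `a + b = α̃(G) + 1` with an edge between any disjoint `a`- and `b`-sets, and suppose `G`
is triangle-free. For any vertex `v` the neighbourhood `N(v)` is independent, so
`|N(v)| ≤ a + b - 1 ≤ δ(G) ≤ deg v` forces `deg v = a + b - 1`. Then every vertex outside `N(v)`
has at least `b`, and likewise at least `a`, neighbours in `N(v)`; two adjacent vertices outside
`N(v)` would have disjoint such neighbourhoods, too many for `N(v)`. Hence `N(v)` and its
complement are a bipartition. -/

section

variable {G : SimpleGraph V} {a b : ℕ}

theorem HasEdgeBetween.symm (hE : HasEdgeBetween G a b) : HasEdgeBetween G b a :=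
  fun A B hAB hA hB ↦
    let ⟨x, hx, y, hy, hxy⟩ := hE B A hAB.symm hB hA
    ⟨y, hy, x, hx, hxy.symm⟩

theorem exists_hasEdgeBetween_biAlpha [Fintype V] (G : SimpleGraph V) :
    ∃ a b, a + b = biAlpha G + 1 ∧ HasEdgeBetween G a b := by
  have hne : {k | ∃ a b : ℕ, 0 < a ∧ 0 < b ∧ a + b = k + 1 ∧ HasEdgeBetween G a b}.Nonempty :=
    ⟨Fintype.card V + 1, 1, Fintype.card V + 1, one_pos, by omega, by omega,
      fun _ B _ _ hB ↦ absurd hB (by have := B.card_le_univ; omega)⟩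
  obtain ⟨a, b, -, -, hab, hE⟩ := Nat.sInf_mem hne
  exact ⟨a, b, hab, hE⟩

theorem HasEdgeBetween.card_lt_of_isIndepSet {s : Finset V} (hE : HasEdgeBetween G a b)
    (hs : G.IsIndepSet (s : Set V)) : #s < a + b := by
  classical
  by_contra! hcard
  obtain ⟨A, hAs, hA⟩ := exists_subset_card_eq (s := s) (n := a) (by omega)
  obtain ⟨B, hBs, hB⟩ := exists_subset_card_eq (s := s \ A) (n := b)
    (by rw [card_sdiff_of_subset hAs]; omega)
  have hAB : Disjoint A B := disjoint_left.2 fun _ hx hx' ↦ (mem_sdiff.1 (hBs hx')).2 hx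
  obtain ⟨x, hx, y, hy, hxy⟩ := hE A B hAB hA hB
  exact hs (hAs hx) (sdiff_subset (hBs hy)) (hAB.forall_ne_finset hx hy) hxy

/-- If `w` had fewer than `b` neighbours in `s`, then `a` non-neighbours of `w` in `s` and
the remaining `b` vertices of `s ∪ {w}` would span no edge. -/
theorem HasEdgeBetween.le_card_filter_adj [DecidableRel G.Adj] {s : Finset V} {w : V}
    (hE : HasEdgeBetween G a b) (hs : G.IsIndepSet (s : Set V)) (hw : w ∉ s)
    (hcard : #s + 1 = a + b) : b ≤ #{u ∈ s | G.Adj w u} := by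
  by_contra! hlt
  have hsplit := card_filter_add_card_filter_not (s := s) (fun u ↦ G.Adj w u)
  classical
  obtain ⟨A, hAs, hA⟩ := exists_subset_card_eq (s := {u ∈ s | ¬G.Adj w u}) (n := a) (by omega)
  have hAs' : A ⊆ s := hAs.trans (filter_subset _ _)
  have hAB : Disjoint A (insert w (s \ A)) := by
    refine disjoint_left.2 fun x hxA hxB ↦ ?_
    rcases mem_insert.1 hxB with rfl | hx
    · exact hw (hAs' hxA)
    · exact (mem_sdiff.1 hx).2 hxA
  have hB : #(insert w (s \ A)) = b := by
    rw [card_insert_of_notMem fun h ↦ hw (sdiff_subset h), card_sdiff_of_subset hAs']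
    omega
  obtain ⟨x, hx, y, hy, hxy⟩ := hE A _ hAB hA hB
  rcases mem_insert.1 hy with rfl | hy
  · exact (mem_filter.1 (hAs hx)).2 hxy.symm
  · exact hs (hAs' hx) (sdiff_subset hy) (hAB.forall_ne_finset hx (mem_insert_of_mem hy)) hxy

theorem SimpleGraph.CliqueFree.not_adj_of_adj_of_adj (hG : G.CliqueFree 3) {x y z : V}
    (hxy : G.Adj x y) (hyz : G.Adj y z) : ¬G.Adj x z :=
  fun hxz ↦ by classical exact hG {x, y, z} (is3Clique_triple_iff.2 ⟨hxy, hxz, hyz⟩)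

theorem SimpleGraph.CliqueFree.isIndepSet_neighborFinset (hG : G.CliqueFree 3) (v : V)
    [Fintype (G.neighborSet v)] : G.IsIndepSet (G.neighborFinset v : Set V) := by
  rw [coe_neighborFinset]
  exact isIndepSet_neighborSet_of_triangleFree _ hG v

theorem HasEdgeBetween.isBipartite_of_degree_add_one_eq [DecidableRel G.Adj] {v : V}
    [Fintype (G.neighborSet v)] (hE : HasEdgeBetween G a b) (hG : G.CliqueFree 3)
    (hv : G.degree v + 1 = a + b) : G.IsBipartite := by
  have hN := hG.isIndepSet_neighborFinset v
  have hcard : #(G.neighborFinset v) + 1 = a + b := by rwa [card_neighborFinset_eq_degree]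
  have hnonadj {x y : V} (hx : ¬G.Adj v x) (hy : ¬G.Adj v y) : ¬G.Adj x y := by
    classical
    intro hxy
    have hbx := hE.le_card_filter_adj hN (by simpa using hx) hcard
    have hay := hE.symm.le_card_filter_adj hN (by simpa using hy) (by omega)
    have hdisj : Disjoint {u ∈ G.neighborFinset v | G.Adj x u}
        {u ∈ G.neighborFinset v | G.Adj y u} :=
      disjoint_filter.2 fun _ _ hxu hyu ↦ hG.not_adj_of_adj_of_adj hxy hyu hxu
    have hsub := card_le_card <|
      union_subset (filter_subset (G.Adj x) (G.neighborFinset v)) (filter_subset (G.Adj y) _)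
    rw [card_union_of_disjoint hdisj] at hsub
    omega
  refine IsBipartiteWith.isBipartite (s := G.neighborSet v) (t := (G.neighborSet v)ᶜ)
    ⟨disjoint_compl_right, fun x y hxy ↦ ?_⟩
  simp only [Set.mem_compl_iff, mem_neighborSet]
  by_cases hx : G.Adj v x <;> by_cases hy : G.Adj v y
  · exact absurd hy (hG.not_adj_of_adj_of_adj hx hxy)
  · exact .inl ⟨hx, hy⟩
  · exact .inr ⟨hx, hy⟩
  · exact absurd hxy (hnonadj hx hy)

end

theorem triangle_or_bipartite [Fintype V] (G : SimpleGraph V)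
    [DecidableRel G.Adj] (h : biAlpha G ≤ G.minDegree) :
    (∃ x y z : V, G.Adj x y ∧ G.Adj y z ∧ G.Adj x z) ∨ G.Colorable 2 := by
  refine or_iff_not_imp_left.2 fun htri ↦ ?_
  have hG : G.CliqueFree 3 := by
    classical
    intro s hs
    obtain ⟨x, y, z, hxy, hxz, hyz, -⟩ := is3Clique_iff.1 hs
    exact htri ⟨x, y, z, hxy, hyz, hxz⟩
  rcases isEmpty_or_nonempty V with hV | ⟨⟨v⟩⟩
  · exact Colorable.of_isEmpty 2
  obtain ⟨a, b, hab, hE⟩ := exists_hasEdgeBetween_biAlpha G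
  have hlt := hE.card_lt_of_isIndepSet (hG.isIndepSet_neighborFinset v)
  rw [card_neighborFinset_eq_degree] at hlt
  have hdeg : G.degree v + 1 = a + b := by
    have := G.minDegree_le_degree v
    omega
  exact hE.isBipartite_of_degree_add_one_eq hG hdeg
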